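/- arXiv:2411.15181 — 5 statements merged into one kernel-verified Lean document; each statement's English description precedes it below -/
import Mathlib

section
/- Compatibility of the cut transform with products: for every finite type S and all f₁, f₂ : S → S → ℕ∞, one has M(f₁ ⋄ f₂) = M(f₁) ▪ M(f₂); that is, for all A, B ⊆ S, sup_{s ∈ A, t ∉ B} sup_{r ∈ S} min(f₁ s r, f₂ r t) = inf_{R ⊆ S} max(M(f₁)(A, R), M(f₂)(R, B)). -/
/-- The cut transform of a flow matrix `f : S → S → ℕ∞`:
`M(f)(A,B) = sup {f s t | s ∈ A, t ∉ B}`. -/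
noncomputable def cutTransform {S : Type*} (f : S → S → ℕ∞) (A B : Set S) : ℕ∞ :=
  ⨆ s ∈ A, ⨆ t ∈ Bᶜ, f s t

/-- The bottleneck product of two flow matrices:
`(f₁ ⋄ f₂) s t = sup_{r ∈ S} min (f₁ s r) (f₂ r t)`. -/
noncomputable def bottleneckProd {S : Type*} (f₁ f₂ : S → S → ℕ∞) (s t : S) : ℕ∞ :=
  ⨆ r : S, min (f₁ s r) (f₂ r t)

/-- The cut product of two cut matrices:
`(M₁ ▪ M₂)(A,B) = inf_{R ⊆ S} max (M₁ A R) (M₂ R B)`. -/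
noncomputable def cutProd {S : Type*} (M₁ M₂ : Set S → Set S → ℕ∞) (A B : Set S) : ℕ∞ :=
  ⨅ R : Set S, max (M₁ A R) (M₂ R B)

/-- Compatibility of the cut transform with products:
`M(f₁ ⋄ f₂) = M(f₁) ▪ M(f₂)`. -/
theorem cutTransform_bottleneckProd {S : Type*} [Fintype S]
    (f₁ f₂ : S → S → ℕ∞) (A B : Set S) :
    cutTransform (bottleneckProd f₁ f₂) A B
      = cutProd (cutTransform f₁) (cutTransform f₂) A B := by
  apply le_antisymm
  · refine le_iInf fun R => ?_
    refine iSup₂_le fun s hs => iSup₂_le fun t ht => iSup_le fun r => ?_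
    by_cases hr : r ∈ R
    · exact le_max_of_le_right <| (min_le_right _ _).trans <|
        le_iSup₂_of_le r hr <| le_iSup₂_of_le t ht le_rfl
    · exact le_max_of_le_left <| (min_le_left _ _).trans <|
        le_iSup₂_of_le s hs <| le_iSup₂_of_le r hr le_rfl
  · set L := cutTransform (bottleneckProd f₁ f₂) A B with hL
    refine iInf_le_of_le {r | (⨆ t ∈ Bᶜ, f₂ r t) ≤ L} (max_le ?_ ?_)
    · refine iSup₂_le fun s hs => iSup₂_le fun r hr => ?_
      have hlt : L < ⨆ t ∈ Bᶜ, f₂ r t := lt_of_not_ge hr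
      rw [lt_iSup_iff] at hlt
      obtain ⟨t, hlt⟩ := hlt
      rw [lt_iSup_iff] at hlt
      obtain ⟨ht, hlt⟩ := hlt
      have hmin : min (f₁ s r) (f₂ r t) ≤ L :=
        le_iSup₂_of_le s hs <| le_iSup₂_of_le t ht <|
          le_iSup (fun r => min (f₁ s r) (f₂ r t)) r
      by_contra h
      exact absurd (lt_min (lt_of_not_ge h) hlt) (not_lt_of_ge hmin)
    · exact iSup₂_le fun r hr => iSup₂_le fun t ht =>
        le_trans (le_iSup₂_of_le t ht le_rfl) hr
end

section
/- Compatibility of the flow transform with products: for every finite type S and all atomic M₁, M₂ : Set S → Set S → ℕ∞, one has f_{M₁ ▪ M₂} = f_{M₁} ⋄ f_{M₂}; that is, for all s, t ∈ S, inf_{R ⊆ S} max(M₁({s}, R), M₂(R, {t}ᶜ)) = sup_{r ∈ S} min(M₁({s}, {r}ᶜ), M₂({r}, {t}ᶜ)). -/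
/-- The flow transform of a cut matrix `M : Set S → Set S → ℕ∞`:
`f_M s t = M({s}, {t}ᶜ)`. -/
def flowTransform {S : Type*} (M : Set S → Set S → ℕ∞) (s t : S) : ℕ∞ :=
  M {s} {t}ᶜ

/-- `M` is atomic if `M(A,B) = sup {M({s},{t}ᶜ) | s ∈ A, t ∉ B}` for all `A B ⊆ S`. -/
def Atomic {S : Type*} (M : Set S → Set S → ℕ∞) : Prop :=
  ∀ A B : Set S, M A B = ⨆ s ∈ A, ⨆ t ∈ Bᶜ, M {s} {t}ᶜ

/-- Compatibility of the flow transform with products: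
for atomic `M₁, M₂`, `f_{M₁ ▪ M₂} = f_{M₁} ⋄ f_{M₂}`. -/
theorem flowTransform_cutProd {S : Type*} [Fintype S]
    (M₁ M₂ : Set S → Set S → ℕ∞) (h₁ : Atomic M₁) (h₂ : Atomic M₂) (s t : S) :
    flowTransform (cutProd M₁ M₂) s t
      = bottleneckProd (flowTransform M₁) (flowTransform M₂) s t := by
  classical
  set V := bottleneckProd (flowTransform M₁) (flowTransform M₂) s t with hV
  have hmin : ∀ r : S, min (flowTransform M₁ s r) (flowTransform M₂ r t) ≤ V :=
    fun r => le_iSup (fun r => min (flowTransform M₁ s r) (flowTransform M₂ r t)) r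
  apply le_antisymm
  · refine iInf_le_of_le {r | flowTransform M₂ r t ≤ V} (max_le ?_ ?_)
    · rw [h₁]
      refine iSup₂_le fun a ha => iSup₂_le fun r hr => ?_
      simp only [Set.mem_singleton_iff] at ha
      subst ha
      simp only [Set.mem_compl_iff, Set.mem_setOf_eq, not_le] at hr
      by_contra h
      push_neg at h
      exact absurd (hmin r) (not_le.mpr (lt_min h hr))
    · rw [h₂]
      refine iSup₂_le fun r hr => iSup₂_le fun u hu => ?_
      simp only [compl_compl, Set.mem_singleton_iff] at hu
      subst hu
      exact hr
  · refine iSup_le fun r => le_iInf fun R => ?_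
    by_cases hr : r ∈ R
    · refine le_trans (min_le_right _ _) (le_max_of_le_right ?_)
      rw [h₂]
      exact le_iSup₂_of_le r hr (le_iSup₂_of_le t (by simp) le_rfl)
    · refine le_trans (min_le_left _ _) (le_max_of_le_left ?_)
      rw [h₁]
      exact le_iSup₂_of_le s rfl (le_iSup₂_of_le r hr le_rfl)
end

section
/- Let S be a finite type and e : S → S → ℕ∞ take values only in {0, 1, ω, ⊤} (with ω := 2), and assume e is idempotent for the bottleneck product, i.e. e = e ⋄ e. Write E = M(e). Let A, B ⊆ S with E(A,B) = 1. Then the following are equivalent: (a) there exists R ⊆ S with E(R,R) = 0, E(A,R) ≤ 1 and E(R,B) ≤ 1; (b) every edge (s,t) with s ∈ A, t ∉ B and e s t = 1 is stable in e. -/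
/-- An edge `(s,t)` is stable in `e` if there are no `s₀, t₀` with
`e s s₀ ≥ ω`, `e s₀ t₀ = 1` and `e t₀ t ≥ ω` (where `ω = 2`). -/
def Stable {S : Type*} (e : S → S → ℕ∞) (s t : S) : Prop :=
  ¬ ∃ s₀ t₀ : S, 2 ≤ e s s₀ ∧ e s₀ t₀ = 1 ∧ 2 ≤ e t₀ t

/-!
Idempotence of `e` makes its weights bottleneck-transitive, `min (e s r) (e r t) ≤ e s t`, and
lets every `ω`-edge factor through two `ω`-edges. The witness `R` is the set of points reached
from `A` by an `ω`-edge followed by an edge of positive weight: transitivity closes `R` under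
positive edges, factoring puts every `ω`-successor of `A` into `R`, and an `ω`-edge from `R` to
`Bᶜ` would exhibit an unstable `1`-edge from `A` to `Bᶜ`. Conversely, an unstable edge
`s → s₀ → t₀ → t` forces `s₀ ∈ R` and `t₀ ∉ R` for any witness `R`, against `E(R,R) = 0`.
-/

open Set

theorem ENat.two_le_iff_one_lt {x : ℕ∞} : 2 ≤ x ↔ 1 < x := by
  rw [← ENat.add_one_le_iff ENat.one_ne_top, one_add_one_eq_two]

section Cut

variable {S : Type*} {f : S → S → ℕ∞} {A B : Set S}

theorem le_cutTransform {s t : S} (hs : s ∈ A) (ht : t ∉ B) : f s t ≤ cutTransform f A B :=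
  le_iSup₂_of_le s hs (le_iSup₂_of_le t ht le_rfl)

theorem cutTransform_le_iff {c : ℕ∞} :
    cutTransform f A B ≤ c ↔ ∀ s ∈ A, ∀ t ∉ B, f s t ≤ c := by
  simp only [cutTransform, iSup₂_le_iff, mem_compl_iff]

theorem stable_of_cutTransform_le_one {R : Set S} (hRR : cutTransform f R R = 0)
    (hAR : cutTransform f A R ≤ 1) (hRB : cutTransform f R B ≤ 1) {s t : S} (hs : s ∈ A)
    (ht : t ∉ B) : Stable f s t := by
  rintro ⟨s₀, t₀, hss₀, hs₀t₀, ht₀t⟩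
  have hs₀ : s₀ ∈ R := by
    by_contra hs₀
    exact absurd (hss₀.trans ((le_cutTransform hs hs₀).trans hAR)) (by decide)
  have ht₀ : t₀ ∉ R := fun ht₀ ↦
    absurd (ht₀t.trans ((le_cutTransform ht₀ ht).trans hRB)) (by decide)
  have h : (1 : ℕ∞) ≤ 0 := hs₀t₀ ▸ (le_cutTransform (f := f) hs₀ ht₀).trans_eq hRR
  exact absurd h (by decide)

end Cut

section Bottleneck

variable {S : Type*} {f g : S → S → ℕ∞} {e : S → S → ℕ∞}

theorem min_le_bottleneckProd (s r t : S) : min (f s r) (g r t) ≤ bottleneckProd f g s t :=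
  le_iSup (fun r ↦ min (f s r) (g r t)) r

theorem exists_lt_of_lt_bottleneckProd {c : ℕ∞} {s t : S} (h : c < bottleneckProd f g s t) :
    ∃ r, c < f s r ∧ c < g r t := by
  obtain ⟨r, hr⟩ := lt_iSup_iff.1 h
  exact ⟨r, lt_min_iff.1 hr⟩

theorem le_of_bottleneckProd_self_eq (he : bottleneckProd e e = e) {c : ℕ∞} {s r t : S}
    (hsr : c ≤ e s r) (hrt : c ≤ e r t) : c ≤ e s t :=
  (le_min hsr hrt).trans ((min_le_bottleneckProd s r t).trans_eq (congrFun₂ he s t))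

theorem exists_two_le_of_bottleneckProd_self_eq (he : bottleneckProd e e = e) {s t : S}
    (h : 2 ≤ e s t) : ∃ r, 2 ≤ e s r ∧ 2 ≤ e r t := by
  rw [← he, ENat.two_le_iff_one_lt] at h
  simpa only [ENat.two_le_iff_one_lt] using exists_lt_of_lt_bottleneckProd h

end Bottleneck

section Witness

variable {S : Type*} {e : S → S → ℕ∞} {A B : Set S}

def omegaOneReach (e : S → S → ℕ∞) (A : Set S) : Set S :=
  {r | ∃ s ∈ A, ∃ r₀, 2 ≤ e s r₀ ∧ 1 ≤ e r₀ r}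

variable (he : bottleneckProd e e = e)
include he

theorem cutTransform_omegaOneReach_self :
    cutTransform e (omegaOneReach e A) (omegaOneReach e A) = 0 := by
  refine nonpos_iff_eq_zero.1 (cutTransform_le_iff.2 ?_)
  rintro r ⟨s, hs, r₀, hsr₀, hr₀r⟩ r' hr'
  by_contra hrr'
  rw [not_le, ← Order.one_le_iff_pos] at hrr'
  exact hr' ⟨s, hs, r₀, hsr₀, le_of_bottleneckProd_self_eq he hr₀r hrr'⟩

theorem cutTransform_le_one_omegaOneReach : cutTransform e A (omegaOneReach e A) ≤ 1 := by
  refine cutTransform_le_iff.2 fun s hs r hr ↦ ?_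
  by_contra hsr
  obtain ⟨r₀, hsr₀, hr₀r⟩ :=
    exists_two_le_of_bottleneckProd_self_eq he (ENat.two_le_iff_one_lt.2 (not_le.1 hsr))
  exact hr ⟨s, hs, r₀, hsr₀, le_trans (by decide) hr₀r⟩

theorem omegaOneReach_cutTransform_le_one (hAB : cutTransform e A B ≤ 1)
    (hstab : ∀ s ∈ A, ∀ t ∉ B, e s t = 1 → Stable e s t) :
    cutTransform e (omegaOneReach e A) B ≤ 1 := by
  refine cutTransform_le_iff.2 ?_
  rintro r ⟨s, hs, r₀, hsr₀, hr₀r⟩ t ht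
  by_contra hrt
  replace hrt := ENat.two_le_iff_one_lt.2 (not_le.1 hrt)
  have hst : e s t ≤ 1 := (le_cutTransform hs ht).trans hAB
  have hsr : ¬ 2 ≤ e s r := fun hsr ↦
    absurd ((le_of_bottleneckProd_self_eq he hsr hrt).trans hst) (by decide)
  have hr₀r_eq : e r₀ r = 1 := by
    refine le_antisymm (not_lt.1 fun h ↦ hsr ?_) hr₀r
    exact le_of_bottleneckProd_self_eq he hsr₀ (ENat.two_le_iff_one_lt.2 h)
  have hr₀t : 1 ≤ e r₀ t := le_of_bottleneckProd_self_eq he hr₀r (le_trans (by decide) hrt)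
  have hst_eq : e s t = 1 :=
    le_antisymm hst (le_of_bottleneckProd_self_eq he (le_trans (by decide) hsr₀) hr₀t)
  exact hstab s hs t ht hst_eq ⟨r₀, r, hsr₀, hr₀r_eq, hrt⟩

end Witness

theorem stability_iff_general {S : Type*} (e : S → S → ℕ∞)
    (hidem : e = fun s t => bottleneckProd e e s t)
    (A B : Set S) (hAB : cutTransform e A B = 1) :
    (∃ R : Set S, cutTransform e R R = 0 ∧ cutTransform e A R ≤ 1 ∧
        cutTransform e R B ≤ 1) ↔
    (∀ s ∈ A, ∀ t ∉ B, e s t = 1 → Stable e s t) := by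
  have he : bottleneckProd e e = e := hidem.symm
  refine ⟨fun ⟨R, hRR, hAR, hRB⟩ s hs t ht _ ↦ stable_of_cutTransform_le_one hRR hAR hRB hs ht,
    fun hstab ↦ ?_⟩
  exact ⟨omegaOneReach e A, cutTransform_omegaOneReach_self he,
    cutTransform_le_one_omegaOneReach he, omegaOneReach_cutTransform_le_one he hAB.le hstab⟩

/-- For idempotent `e` with values in `{0, 1, ω, ⊤}` (`ω = 2`) and `E = M(e)` with
`E(A,B) = 1`: there is a witness `R` of stability of `(A,B)` in `E` iff every
`1`-edge from `A` to the complement of `B` is stable in `e`. -/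
theorem stability_iff {S : Type*} [Fintype S] (e : S → S → ℕ∞)
    (hval : ∀ s t : S, e s t = 0 ∨ e s t = 1 ∨ e s t = 2 ∨ e s t = ⊤)
    (hidem : e = fun s t => bottleneckProd e e s t)
    (A B : Set S) (hAB : cutTransform e A B = 1) :
    (∃ R : Set S, cutTransform e R R = 0 ∧ cutTransform e A R ≤ 1 ∧
        cutTransform e R B ≤ 1) ↔
    (∀ s ∈ A, ∀ t ∉ B, e s t = 1 → Stable e s t) :=
  stability_iff_general e hidem A B hAB
end

section
/- Disconnection cost equals tropical cut product: let S be a finite type, f₁, …, f_ℓ : S → S → ℕ∞ (ℓ ≥ 1) a pipeline, each f_i taking values only in {0, 1, ⊤}, and S₀, F ⊆ S. Then D_P(S₀, F) = B_P(S₀, F), where D_P(S₀, F) ∈ ℕ∞ is the minimum cardinality of an index set I ⊆ {1,…,ℓ} that disconnects S₀ from F (⊤ if no such set exists), and B_P(S₀, F) ∈ ℕ∞ is the infimum, over all sequences of subsets A₀ = S₀, A₁, …, A_{ℓ-1} ⊆ S, A_ℓ = S ∖ F, of Σ_{i=1}^{ℓ} sup {f_i s t | s ∈ A_{i-1}, t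 ∉ A_i} (sums taken in ℕ∞, suprema of empty sets being 0). -/
/-- An index set `I` disconnects `S₀` from `F` in the pipeline `f₁, …, f_ℓ` if there
is no path `s₀ ∈ S₀, s₁, …, s_ℓ ∈ F` with `f_i s_{i-1} s_i ≥ 1` for every `i` and
`f_i s_{i-1} s_i = ⊤` whenever `i ∈ I`. -/
def Disconnects {S : Type*} {ℓ : ℕ} (f : Fin ℓ → S → S → ℕ∞) (S₀ F : Set S)
    (I : Finset (Fin ℓ)) : Prop :=
  ¬ ∃ w : Fin (ℓ + 1) → S, w 0 ∈ S₀ ∧ w (Fin.last ℓ) ∈ F ∧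
      (∀ i : Fin ℓ, 1 ≤ f i (w i.castSucc) (w i.succ)) ∧
      (∀ i ∈ I, f i (w i.castSucc) (w i.succ) = ⊤)

/-- `D_P(S₀,F)`: the minimum cardinality of an index set disconnecting `S₀` from `F`
(`⊤` if there is none). -/
noncomputable def Dcost {S : Type*} {ℓ : ℕ} (f : Fin ℓ → S → S → ℕ∞)
    (S₀ F : Set S) : ℕ∞ :=
  ⨅ (I : Finset (Fin ℓ)) (_ : Disconnects f S₀ F I), (I.card : ℕ∞)

/-- `B_P(S₀,F)`: the infimum over all sequences of cuts `A₀ = S₀, …, A_ℓ = S ∖ F`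
of `Σ_{i=1}^{ℓ} sup {f_i s t | s ∈ A_{i-1}, t ∉ A_i}`. -/
noncomputable def Bcost {S : Type*} {ℓ : ℕ} (f : Fin ℓ → S → S → ℕ∞)
    (S₀ F : Set S) : ℕ∞ :=
  ⨅ (A : Fin (ℓ + 1) → Set S) (_ : A 0 = S₀) (_ : A (Fin.last ℓ) = Fᶜ),
    ∑ i : Fin ℓ, ⨆ s ∈ A i.castSucc, ⨆ t ∈ (A i.succ)ᶜ, f i s t

/-!
Every path from `S₀` to `F` crosses a cut `A₀, …, A_ℓ` at some layer, where its edge value is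
bounded by that layer's term; so for a cut of finite cost the layers with term `≥ 1` disconnect,
and there are at most as many of them as the cost. Conversely, for a disconnecting `I` let `A_j`
be the states reachable at layer `j` along edges a path avoiding `I` may use, and `A_ℓ = S ∖ F`.
An edge leaving this cut is unusable, so it has value `0`, or value `1` at a layer of `I`; the
cut therefore costs at most `|I|`.
-/

lemma Fin.exists_castSucc_and_not_succ {ℓ : ℕ} {P : Fin (ℓ + 1) → Prop} (h0 : P 0)
    (hlast : ¬ P (Fin.last ℓ)) : ∃ i : Fin ℓ, P i.castSucc ∧ ¬ P i.succ := by
  by_contra! h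
  exact hlast (Fin.induction h0 h (Fin.last ℓ))

section Cuts

variable {S : Type*} {ℓ : ℕ} {S₀ F : Set S}

def reachable (r : Fin ℓ → S → S → Prop) (S₀ : Set S) (j : Fin (ℓ + 1)) : Set S :=
  {s | ∃ w : Fin (ℓ + 1) → S, w 0 ∈ S₀ ∧ w j = s ∧
    ∀ i : Fin ℓ, i.castSucc < j → r i (w i.castSucc) (w i.succ)}

variable {r : Fin ℓ → S → S → Prop}

lemma reachable_zero : reachable r S₀ 0 = S₀ := by
  ext s
  constructor
  · rintro ⟨w, hw0, rfl, -⟩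
    exact hw0
  · exact fun hs => ⟨fun _ => s, hs, rfl, fun i hi => absurd hi (Fin.not_lt_zero _)⟩

lemma succ_mem_reachable {i : Fin ℓ} {s t : S} (hs : s ∈ reachable r S₀ i.castSucc)
    (hst : r i s t) : t ∈ reachable r S₀ i.succ := by
  obtain ⟨w, hw0, rfl, hw⟩ := hs
  refine ⟨Function.update w i.succ t, ?_, by simp, fun k hk => ?_⟩
  · rwa [Function.update_of_ne (Fin.succ_ne_zero i).symm]
  · rcases (Fin.castSucc_lt_succ_iff.mp hk).lt_or_eq with hki | rfl
    · have hk : k.castSucc < i.castSucc := Fin.castSucc_lt_castSucc_iff.mpr hki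
      have hk₁ : k.castSucc ≠ i.succ := (hk.trans Fin.castSucc_lt_succ).ne
      have hk₂ : k.succ ≠ i.succ := (Fin.succ_lt_succ_iff.mpr hki).ne
      simpa [Function.update_of_ne hk₁, Function.update_of_ne hk₂] using hw k hk
    · simpa [Function.update_of_ne (Fin.castSucc_lt_succ (i := k)).ne] using hst

lemma exists_cut_not_crossed (hℓ : 1 ≤ ℓ)
    (h : ¬ ∃ w : Fin (ℓ + 1) → S, w 0 ∈ S₀ ∧ w (Fin.last ℓ) ∈ F ∧
      ∀ i : Fin ℓ, r i (w i.castSucc) (w i.succ)) :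
    ∃ A : Fin (ℓ + 1) → Set S, A 0 = S₀ ∧ A (Fin.last ℓ) = Fᶜ ∧
      ∀ i s t, s ∈ A i.castSucc → t ∉ A i.succ → ¬ r i s t := by
  have hlast : reachable r S₀ (Fin.last ℓ) ⊆ Fᶜ := by
    rintro t ⟨w, hw0, rfl, hw⟩ htF
    exact h ⟨w, hw0, htF, fun i => hw i (Fin.castSucc_lt_last i)⟩
  refine ⟨Function.update (reachable r S₀) (Fin.last ℓ) Fᶜ, ?_, by simp, ?_⟩
  · rw [Function.update_of_ne (by simp [Fin.ext_iff]; omega), reachable_zero]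
  · intro i s t hs ht hst
    rw [Function.update_of_ne (Fin.castSucc_ne_last i)] at hs
    have hreach := succ_mem_reachable hs hst
    by_cases hi : i.succ = Fin.last ℓ
    · rw [hi, Function.update_self] at ht
      rw [hi] at hreach
      exact ht (hlast hreach)
    · rw [Function.update_of_ne hi] at ht
      exact ht hreach

end Cuts

section Costs

variable {S : Type*} {ℓ : ℕ} (f : Fin ℓ → S → S → ℕ∞) {S₀ F : Set S}

lemma disconnects_of_cut {A : Fin (ℓ + 1) → Set S} (hA0 : A 0 = S₀)
    (hAl : A (Fin.last ℓ) = Fᶜ)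
    (hfin : ∀ i, ⨆ s ∈ A i.castSucc, ⨆ t ∈ (A i.succ)ᶜ, f i s t ≠ ⊤) :
    Disconnects f S₀ F
      {i | 1 ≤ ⨆ s ∈ A i.castSucc, ⨆ t ∈ (A i.succ)ᶜ, f i s t} := by
  rintro ⟨w, hw0, hwl, hpos, htop⟩
  obtain ⟨i, hs, ht⟩ := Fin.exists_castSucc_and_not_succ (P := fun j => w j ∈ A j)
    (by simpa [hA0] using hw0) (by simpa [hAl] using hwl)
  have hle : f i (w i.castSucc) (w i.succ) ≤ ⨆ s ∈ A i.castSucc, ⨆ t ∈ (A i.succ)ᶜ, f i s t :=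
    le_iSup₂_of_le _ hs (le_iSup₂_of_le _ ht le_rfl)
  refine hfin i (top_le_iff.mp ?_)
  rw [← htop i (by simpa using (hpos i).trans hle)]
  exact hle

lemma Dcost_le_Bcost (S₀ F : Set S) : Dcost f S₀ F ≤ Bcost f S₀ F := by
  refine le_iInf fun A => le_iInf fun hA0 => le_iInf fun hAl => ?_
  set c : Fin ℓ → ℕ∞ := fun i => ⨆ s ∈ A i.castSucc, ⨆ t ∈ (A i.succ)ᶜ, f i s t
  by_cases htop : ∑ i, c i = ⊤
  · exact htop ▸ le_top
  have hfin : ∀ i, c i ≠ ⊤ := fun i hi => htop (ENat.sum_eq_top.mpr ⟨i, Finset.mem_univ i, hi⟩)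
  calc Dcost f S₀ F ≤ ({i | 1 ≤ c i} : Finset (Fin ℓ)).card :=
        iInf₂_le _ (disconnects_of_cut f hA0 hAl hfin)
    _ = ∑ i ∈ {i | 1 ≤ c i}, 1 := by simp
    _ ≤ ∑ i ∈ {i | 1 ≤ c i}, c i := Finset.sum_le_sum fun i hi => (Finset.mem_filter.mp hi).2
    _ ≤ ∑ i, c i := Finset.sum_le_sum_of_subset (Finset.subset_univ _)

lemma ENat.le_ite_of_not_one_le_and {x : ℕ∞} {p : Prop} [Decidable p]
    (hx : x = 0 ∨ x = 1 ∨ x = ⊤) (h : ¬ (1 ≤ x ∧ (p → x = ⊤))) :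
    x ≤ if p then 1 else 0 := by
  rcases hx with rfl | rfl | rfl <;> split_ifs <;> simp_all

lemma Bcost_le_card_of_disconnects (hℓ : 1 ≤ ℓ)
    (hval : ∀ i : Fin ℓ, ∀ s t : S, f i s t = 0 ∨ f i s t = 1 ∨ f i s t = ⊤)
    {I : Finset (Fin ℓ)} (hI : Disconnects f S₀ F I) : Bcost f S₀ F ≤ I.card := by
  obtain ⟨A, hA0, hAl, hA⟩ :=
    exists_cut_not_crossed (r := fun i s t => 1 ≤ f i s t ∧ (i ∈ I → f i s t = ⊤)) hℓ
      fun ⟨w, hw0, hwl, hw⟩ => hI ⟨w, hw0, hwl, fun i => (hw i).1, fun i hi => (hw i).2 hi⟩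
  calc Bcost f S₀ F ≤ ∑ i, ⨆ s ∈ A i.castSucc, ⨆ t ∈ (A i.succ)ᶜ, f i s t :=
        (iInf₂_le A hA0).trans (iInf_le _ hAl)
    _ ≤ ∑ i, if i ∈ I then 1 else 0 :=
        Finset.sum_le_sum fun i _ => iSup₂_le fun s hs => iSup₂_le fun t ht =>
          ENat.le_ite_of_not_one_le_and (hval i s t) (hA i s t hs ht)
    _ = I.card := by simp

end Costs

theorem Dcost_eq_Bcost_general {S : Type*} {ℓ : ℕ} (hℓ : 1 ≤ ℓ)
    (f : Fin ℓ → S → S → ℕ∞)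
    (hval : ∀ i : Fin ℓ, ∀ s t : S, f i s t = 0 ∨ f i s t = 1 ∨ f i s t = ⊤)
    (S₀ F : Set S) :
    Dcost f S₀ F = Bcost f S₀ F :=
  le_antisymm (Dcost_le_Bcost f S₀ F)
    (le_iInf₂ fun _ hI => Bcost_le_card_of_disconnects f hℓ hval hI)

/-- Disconnection cost equals the tropical cut product: for a pipeline of length
`ℓ ≥ 1` with values in `{0, 1, ⊤}`, `D_P(S₀,F) = B_P(S₀,F)`. -/
theorem Dcost_eq_Bcost {S : Type*} [Fintype S] {ℓ : ℕ} (hℓ : 1 ≤ ℓ)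
    (f : Fin ℓ → S → S → ℕ∞)
    (hval : ∀ i : Fin ℓ, ∀ s t : S, f i s t = 0 ∨ f i s t = 1 ∨ f i s t = ⊤)
    (S₀ F : Set S) :
    Dcost f S₀ F = Bcost f S₀ F :=
  Dcost_eq_Bcost_general hℓ f hval S₀ F
end

section
/- Pipeline capacity is at least the disconnection cost: let S be a finite type, f₁, …, f_ℓ : S → S → ℕ∞ (ℓ ≥ 1) a pipeline, each f_i taking values only in {0, 1, ⊤}, let s ∈ S, F ⊆ S and n ∈ ℕ. If every index set I ⊆ {1,…,ℓ} that disconnects {s} from F satisfies |I| ≥ n, then there exist a finite set X of cardinality n and functions w₀, w₁, …, w_ℓ : X → S such that w₀ x = s for all x ∈ X, for every i ∈ {1,…,ℓ} and all s', t' ∈ S the number of x ∈ X with w_{i-1} x = s' and w_i x = t' is at most f_i s' t' (as an element of ℕ∞), and w_ℓ x ∈ F for all x ∈ X. -/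
open Finset

theorem Relation.ReflTransGen.exists_head_avoiding {α : Type*} {r : α → α → Prop} {a b : α}
    (h : Relation.ReflTransGen r a b) (hab : a ≠ b) :
    ∃ c, r a c ∧ c ≠ a ∧ Relation.ReflTransGen (fun x y => r x y ∧ x ≠ a ∧ y ≠ a) c b := by
  induction h with
  | refl => exact absurd rfl hab
  | @tail m b _ hmb ih =>
    by_cases hm : m = a
    · subst hm
      exact ⟨b, hmb, hab.symm, .refl⟩
    · obtain ⟨c, hac, hca, hcm⟩ := ih (Ne.symm hm)
      exact ⟨c, hac, hca, hcm.tail ⟨hmb, hm, Ne.symm hab⟩⟩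

namespace NetworkFlow

variable {N E : Type*} (tail head : E → N)

def ResidualAdj (c : E → ℕ∞) (g : E → ℕ) (x y : N) : Prop :=
  ∃ e, (tail e = x ∧ head e = y ∧ (g e : ℕ∞) < c e) ∨ (head e = x ∧ tail e = y ∧ g e ≠ 0)

variable {tail head} in
theorem ResidualAdj.of_eqOn {c : E → ℕ∞} {g g' : E → ℕ} {x a b : N}
    (hg' : ∀ e, tail e ≠ x → head e ≠ x → g' e = g e) (ha : a ≠ x) (hb : b ≠ x)
    (h : ResidualAdj tail head c g a b) : ResidualAdj tail head c g' a b := by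
  obtain ⟨e, ⟨rfl, rfl, he⟩ | ⟨rfl, rfl, he⟩⟩ := h
  · exact ⟨e, .inl ⟨rfl, rfl, by rwa [hg' e ha hb]⟩⟩
  · exact ⟨e, .inr ⟨rfl, rfl, by rwa [hg' e hb ha]⟩⟩

variable {tail head} in
theorem eq_capacity_of_closed {c : E → ℕ∞} {g : E → ℕ} {A : Set N}
    (hA : ∀ a ∈ A, ∀ b, ResidualAdj tail head c g a b → b ∈ A) (hg : ∀ e, (g e : ℕ∞) ≤ c e)
    {e : E} (ht : tail e ∈ A) (hh : head e ∉ A) : (g e : ℕ∞) = c e :=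
  (hg e).eq_of_not_lt fun hlt => hh (hA _ ht _ ⟨e, .inl ⟨rfl, rfl, hlt⟩⟩)

variable [Fintype E] [DecidableEq N]

def inflow (g : E → ℕ) (x : N) : ℕ := ∑ e with head e = x, g e

def outflow (g : E → ℕ) (x : N) : ℕ := ∑ e with tail e = x, g e

def excess (g : E → ℕ) (x : N) : ℤ := inflow head g x - outflow tail g x

variable {tail head}

theorem inflow_add_single [DecidableEq E] (g : E → ℕ) (e : E) :
    inflow head (g + Pi.single e 1) = inflow head g + Pi.single (head e) 1 := by
  ext x
  simp [inflow, sum_add_distrib, Pi.single_apply, eq_comm]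

theorem outflow_add_single [DecidableEq E] (g : E → ℕ) (e : E) :
    outflow tail (g + Pi.single e 1) = outflow tail g + Pi.single (tail e) 1 :=
  inflow_add_single g e

theorem excess_add_single [DecidableEq E] (g : E → ℕ) (e : E) :
    excess tail head (g + Pi.single e 1) =
      excess tail head g + Pi.single (head e) 1 - Pi.single (tail e) 1 := by
  ext x
  simp only [excess, inflow_add_single, outflow_add_single, Pi.add_apply, Pi.sub_apply,
    Pi.single_apply]
  split_ifs <;> push_cast <;> ring

theorem exists_push [DecidableEq E] {c : E → ℕ∞} {g : E → ℕ} (hg : ∀ e, (g e : ℕ∞) ≤ c e)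
    {x y : N} (hxy : ResidualAdj tail head c g x y) :
    ∃ g' : E → ℕ, (∀ e, (g' e : ℕ∞) ≤ c e) ∧
      excess tail head g' = excess tail head g - Pi.single x 1 + Pi.single y 1 ∧
      ∀ e, tail e ≠ x → head e ≠ x → g' e = g e := by
  obtain ⟨e, ⟨rfl, rfl, he⟩ | ⟨rfl, rfl, he⟩⟩ := hxy
  · refine ⟨g + Pi.single e 1, fun e' => ?_, by rw [excess_add_single]; abel,
      fun e' he' _ => by simp [show e' ≠ e by rintro rfl; exact he' rfl]⟩
    rcases eq_or_ne e' e with rfl | hne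
    · simpa using Order.add_one_le_of_lt he
    · simpa [hne] using hg e'
  · have hadd : (g - Pi.single e 1) + Pi.single e 1 = g := by
      ext e'
      rcases eq_or_ne e' e with rfl | hne
      · simp; omega
      · simp [hne]
    refine ⟨g - Pi.single e 1, fun e' => le_trans (by simp) (hg e'), ?_,
      fun e' _ he' => by simp [show e' ≠ e by rintro rfl; exact he' rfl]⟩
    conv_rhs => rw [← hadd, excess_add_single]
    abel

theorem exists_augment [Fintype N] [DecidableEq E] {c : E → ℕ∞} {g : E → ℕ}
    (hg : ∀ e, (g e : ℕ∞) ≤ c e) {x y : N}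
    (hxy : Relation.ReflTransGen (ResidualAdj tail head c g) x y) :
    ∃ g' : E → ℕ, (∀ e, (g' e : ℕ∞) ≤ c e) ∧
      excess tail head g' = excess tail head g - Pi.single x 1 + Pi.single y 1 := by
  suffices key : ∀ (V : Finset N) (g : E → ℕ) (x : N), x ∈ V → (∀ e, (g e : ℕ∞) ≤ c e) →
      Relation.ReflTransGen (fun a b => ResidualAdj tail head c g a b ∧ b ∈ V) x y →
      ∃ g' : E → ℕ, (∀ e, (g' e : ℕ∞) ≤ c e) ∧
        excess tail head g' = excess tail head g - Pi.single x 1 + Pi.single y 1 from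
    key univ g x (mem_univ x) hg
      (Relation.ReflTransGen.mono (fun a b hab => ⟨hab, mem_univ b⟩) _ _ hxy)
  intro V
  induction V using Finset.strongInduction with
  | H V ih =>
  intro g x hxV hg hxy
  by_cases hxy' : x = y
  · subst hxy'
    exact ⟨g, hg, by abel⟩
  -- a walk from `x` that never returns to `x` is still residual after pushing along its first edge
  obtain ⟨z, ⟨hxz, hzV⟩, hzx, hzy⟩ := hxy.exists_head_avoiding hxy'
  obtain ⟨g₁, hg₁, hex₁, heq₁⟩ := exists_push hg hxz
  obtain ⟨g', hg', hex'⟩ := ih (V.erase x) (erase_ssubset hxV) g₁ z (mem_erase.2 ⟨hzx, hzV⟩)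
    hg₁ (Relation.ReflTransGen.mono (fun a b ⟨⟨hab, hbV⟩, hax, hbx⟩ =>
      ⟨hab.of_eqOn heq₁ hax hbx, mem_erase.2 ⟨hbx, hbV⟩⟩) _ _ hzy)
  exact ⟨g', hg', by rw [hex', hex₁]; abel⟩

theorem sum_excess (g : E → ℕ) (A : Finset N) :
    ∑ x ∈ A, excess tail head g x =
      ∑ e with head e ∈ A ∧ tail e ∉ A, (g e : ℤ) -
        ∑ e with tail e ∈ A ∧ head e ∉ A, (g e : ℤ) := by
  simp only [excess, inflow, outflow, Nat.cast_sum, sum_sub_distrib,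
    sum_fiberwise_eq_sum_filter]
  simp only [sum_filter, ← sum_sub_distrib]
  refine sum_congr rfl fun e _ => ?_
  split_ifs <;> simp_all

theorem sum_excess_of_closed {c : E → ℕ∞} {g : E → ℕ} {A : Finset N}
    (hA : ∀ a ∈ A, ∀ b, ResidualAdj tail head c g a b → b ∈ A) :
    ∑ x ∈ A, excess tail head g x = -∑ e with tail e ∈ A ∧ head e ∉ A, (g e : ℤ) := by
  rw [sum_excess, sum_eq_zero fun e he => ?_, zero_sub]
  obtain ⟨hh, ht⟩ := (mem_filter.1 he).2
  by_contra hne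
  exact ht (hA _ hh _ ⟨e, .inr ⟨rfl, rfl, by exact_mod_cast hne⟩⟩)

end NetworkFlow

theorem exists_map_card_pair_eq {X S T : Type*} [Fintype X] [Fintype S] [DecidableEq S]
    [Fintype T] [DecidableEq T] (a : X → S) (m : S → T → ℕ) (h : ∀ u, #{x | a x = u} = ∑ v, m u v) :
    ∃ b : X → T, ∀ u v, #{x | a x = u ∧ b x = v} = m u v := by
  have e : ∀ u, {x // a x = u} ≃ Σ v, Fin (m u v) := fun u =>
    Fintype.equivOfCardEq (by simp [Fintype.card_subtype, h u])
  let E : X ≃ Σ u, Σ v, Fin (m u v) := (Equiv.sigmaFiberEquiv a).symm.trans (.sigmaCongrRight e)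
  have hE : ∀ x, (E x).1 = a x := fun x => rfl
  refine ⟨fun x => (E x).2.1, fun u v => ?_⟩
  rw [card_equiv E (t := {y | y.1 = u ∧ y.2.1 = v}) (fun x => by simp [hE])]
  rw [card_filter, Fintype.sum_sigma, Fintype.sum_eq_single u (fun u' hu => by simp [hu]),
    Fintype.sum_sigma, Fintype.sum_eq_single v (fun v' hv => by simp [hv])]
  simp

namespace Pipeline

open NetworkFlow

variable {S : Type*} [Fintype S] [DecidableEq S] {ℓ : ℕ}

def tail (e : Fin ℓ × S × S) : Fin (ℓ + 1) × S := (e.1.castSucc, e.2.1)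

def head (e : Fin ℓ × S × S) : Fin (ℓ + 1) × S := (e.1.succ, e.2.2)

def capacity (f : Fin ℓ → S → S → ℕ∞) (e : Fin ℓ × S × S) : ℕ∞ := f e.1 e.2.1 e.2.2

theorem inflow_zero (g : Fin ℓ × S × S → ℕ) (v : S) : inflow head g (0, v) = 0 :=
  sum_eq_zero fun _ he => absurd (congrArg Prod.fst (mem_filter.1 he).2) (Fin.succ_ne_zero _)

theorem outflow_last (g : Fin ℓ × S × S → ℕ) (u : S) : outflow tail g (Fin.last ℓ, u) = 0 :=
  sum_eq_zero fun _ he => absurd (congrArg Prod.fst (mem_filter.1 he).2) (Fin.castSucc_ne_last _)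

theorem inflow_succ (g : Fin ℓ × S × S → ℕ) (i : Fin ℓ) (v : S) :
    inflow head g (i.succ, v) = ∑ u, g (i, u, v) := by
  refine sum_nbij' (fun e => e.2.1) (fun u => (i, u, v)) ?_ ?_ ?_ ?_ ?_ <;>
    simp +contextual [head, eq_comm]

theorem outflow_castSucc (g : Fin ℓ × S × S → ℕ) (i : Fin ℓ) (u : S) :
    outflow tail g (i.castSucc, u) = ∑ v, g (i, u, v) := by
  refine sum_nbij' (fun e => e.2.2) (fun v => (i, u, v)) ?_ ?_ ?_ ?_ ?_ <;>
    simp +contextual [tail, eq_comm]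

def IsFlow (f : Fin ℓ → S → S → ℕ∞) (s : S) (F : Set S) (k : ℕ) (g : Fin ℓ × S × S → ℕ) :
    Prop :=
  (∀ e, (g e : ℕ∞) ≤ capacity f e) ∧
    ∀ x : Fin (ℓ + 1) × S, ¬(x.1 = Fin.last ℓ ∧ x.2 ∈ F) →
      excess tail head g x = if x = (0, s) then -(k : ℤ) else 0

variable {f : Fin ℓ → S → S → ℕ∞} {s : S} {F : Set S} {k : ℕ} {g : Fin ℓ × S × S → ℕ}

theorem isFlow_zero : IsFlow f s F 0 0 :=
  ⟨fun _ => by simp, fun x _ => by simp [excess, inflow, outflow]⟩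

theorem IsFlow.outflow_eq (hg : IsFlow f s F k g) {x : Fin (ℓ + 1) × S}
    (hx : ¬(x.1 = Fin.last ℓ ∧ x.2 ∈ F)) :
    outflow tail g x = inflow head g x + if x = (0, s) then k else 0 := by
  have := hg.2 x hx
  rw [excess] at this
  split_ifs at this ⊢ <;> omega

theorem IsFlow.augment (hg : IsFlow f s F k g) {t : S} (ht : t ∈ F)
    (hreach : Relation.ReflTransGen (ResidualAdj tail head (capacity f) g)
      (0, s) (Fin.last ℓ, t)) :
    ∃ g', IsFlow f s F (k + 1) g' := by
  obtain ⟨g', hcap, hex⟩ := exists_augment hg.1 hreach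
  refine ⟨g', hcap, fun x hx => ?_⟩
  have hxt : x ≠ (Fin.last ℓ, t) := by rintro rfl; exact hx ⟨rfl, ht⟩
  rw [hex, Pi.add_apply, Pi.sub_apply, hg.2 x hx, Pi.single_apply, Pi.single_apply, if_neg hxt]
  split_ifs
  · push_cast; ring
  · simp

theorem disconnects_of_closed (hcap : ∀ e, (g e : ℕ∞) ≤ capacity f e)
    {A : Finset (Fin (ℓ + 1) × S)}
    (hA : ∀ a ∈ A, ∀ b, ResidualAdj tail head (capacity f) g a b → b ∈ A)
    (hsA : (0, s) ∈ A) (hAF : ∀ t ∈ F, (Fin.last ℓ, t) ∉ A) :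
    Disconnects f {s} F
      ((({e | tail e ∈ A ∧ head e ∉ A} : Finset _).filter (g · ≠ 0)).image Prod.fst) := by
  rintro ⟨w, hw0, hwF, hge, htop⟩
  have hwA : ∀ i, (i, w i) ∈ A := by
    refine Fin.induction (by rwa [Set.mem_singleton_iff.1 hw0]) fun i hi => ?_
    by_contra hout
    have hsat : (g (i, w i.castSucc, w i.succ) : ℕ∞) = f i (w i.castSucc) (w i.succ) :=
      eq_capacity_of_closed hA hcap hi hout
    have hpos : g (i, w i.castSucc, w i.succ) ≠ 0 := fun h0 => by simpa [← hsat, h0] using hge i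
    have hi_top := htop i <| mem_image.2
      ⟨_, mem_filter.2 ⟨mem_filter.2 ⟨mem_univ (i, w i.castSucc, w i.succ), hi, hout⟩, hpos⟩, rfl⟩
    exact ENat.natCast_ne_top _ (hsat.trans hi_top)
  exact hAF _ hwF (hwA _)

theorem IsFlow.exists_disconnects (hg : IsFlow f s F k g)
    (hF : ∀ t ∈ F, ¬Relation.ReflTransGen (ResidualAdj tail head (capacity f) g)
      (0, s) (Fin.last ℓ, t)) :
    ∃ I : Finset (Fin ℓ), Disconnects f {s} F I ∧ I.card ≤ k := by
  classical
  set A : Finset (Fin (ℓ + 1) × S) :=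
    {x | Relation.ReflTransGen (ResidualAdj tail head (capacity f) g) (0, s) x}
  have hA : ∀ a ∈ A, ∀ b, ResidualAdj tail head (capacity f) g a b → b ∈ A :=
    fun a ha b hab => mem_filter.2 ⟨mem_univ b, (mem_filter.1 ha).2.tail hab⟩
  have hsA : ((0 : Fin (ℓ + 1)), s) ∈ A := mem_filter.2 ⟨mem_univ _, .refl⟩
  have hAF : ∀ t ∈ F, (Fin.last ℓ, t) ∉ A := fun t ht htA => hF t ht (mem_filter.1 htA).2
  set L : Finset (Fin ℓ × S × S) := {e | tail e ∈ A ∧ head e ∉ A}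
  have hL : ∑ e ∈ L, (g e : ℤ) = k := by
    have : _ = -∑ e ∈ L, (g e : ℤ) := sum_excess_of_closed hA
    rw [sum_congr rfl fun x hx => hg.2 x fun h => hAF _ h.2 (h.1 ▸ hx), sum_ite_eq' A,
      if_pos hsA] at this
    omega
  refine ⟨_, disconnects_of_closed hg.1 hA hsA hAF, ?_⟩
  calc _ ≤ #(L.filter (g · ≠ 0)) := card_image_le
    _ ≤ ∑ e ∈ L.filter (g · ≠ 0), g e := by
      simpa using card_nsmul_le_sum _ g 1 fun e he =>
        Nat.one_le_iff_ne_zero.2 (mem_filter.1 he).2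
    _ = k := by rw [sum_filter_ne_zero]; exact_mod_cast hL

theorem exists_isFlow {n : ℕ} (h : ∀ I : Finset (Fin ℓ), Disconnects f {s} F I → n ≤ I.card) :
    ∃ g, IsFlow f s F n g := by
  suffices ∀ k ≤ n, ∃ g, IsFlow f s F k g from this n le_rfl
  intro k hk
  induction k with
  | zero => exact ⟨0, isFlow_zero⟩
  | succ k ih =>
    obtain ⟨g, hg⟩ := ih (by omega)
    by_contra hno
    obtain ⟨I, hI, hcard⟩ := hg.exists_disconnects fun t ht hr => hno (hg.augment ht hr)
    have := h I hI
    omega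

theorem IsFlow.exists_tokens {n : ℕ} (hg : IsFlow f s F n g) :
    ∃ w : Fin (ℓ + 1) → Fin n → S, (∀ x, w 0 x = s) ∧
      (∀ i u v, #{x | w i.castSucc x = u ∧ w i.succ x = v} = g (i, u, v)) ∧
      ∀ x, w (Fin.last ℓ) x ∈ F := by
  have hnext : ∀ (i : Fin ℓ) (a : Fin n → S), ∃ b : Fin n → S,
      (∀ u, #{x | a x = u} = ∑ v, g (i, u, v)) →
        ∀ u v, #{x | a x = u ∧ b x = v} = g (i, u, v) :=
    fun i a => (em _).elim (fun ha => (exists_map_card_pair_eq a _ ha).imp fun _ hb _ => hb)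
      fun ha => ⟨a, fun h => absurd h ha⟩
  choose next hnext using hnext
  let w : Fin (ℓ + 1) → Fin n → S := fun i => Fin.induction (fun _ => s) next i
  have hrow : ∀ i : Fin ℓ, (∀ u, #{x | w i.castSucc x = u} =
      inflow head g (i.castSucc, u) + if (i.castSucc, u) = (0, s) then n else 0) →
      ∀ u, #{x | w i.castSucc x = u} = ∑ v, g (i, u, v) := fun i h u => by
    rw [h, ← hg.outflow_eq fun h => Fin.castSucc_ne_last i h.1, outflow_castSucc]
  have hcount : ∀ i v, #{x | w i x = v} =
      inflow head g (i, v) + if (i, v) = (0, s) then n else 0 := by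
    intro i
    induction i using Fin.induction with
    | zero =>
      intro v
      rcases eq_or_ne v s with rfl | hv
      · simp [w, inflow_zero]
      · simp [w, inflow_zero, hv, Ne.symm hv]
    | succ i ih =>
      intro v
      rw [inflow_succ, if_neg fun h => Fin.succ_ne_zero i (congrArg Prod.fst h), add_zero,
        card_eq_sum_card_fiberwise (f := w i.castSucc) (t := univ)
          fun _ _ => mem_coe.2 (mem_univ _)]
      refine sum_congr rfl fun u _ => ?_
      rw [← hnext i _ (hrow i ih) u v, filter_filter]
      exact congrArg card (filter_congr fun _ _ => and_comm)
  refine ⟨w, fun x => rfl, fun i u v => hnext i _ (hrow i (hcount _)) u v, fun x => ?_⟩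
  by_contra hx
  have := hcount (Fin.last ℓ) (w (Fin.last ℓ) x)
  rw [← hg.outflow_eq fun h => hx h.2, outflow_last, card_eq_zero] at this
  exact (eq_empty_iff_forall_notMem.1 this) x (by simp)

end Pipeline

theorem capacity_ge_disconnection_cost_general {S : Type*} [Fintype S] [DecidableEq S]
    {ℓ : ℕ} (f : Fin ℓ → S → S → ℕ∞)
    (s : S) (F : Set S) (n : ℕ)
    (h : ∀ I : Finset (Fin ℓ), Disconnects f {s} F I → n ≤ I.card) :
    ∃ w : Fin (ℓ + 1) → Fin n → S,
      (∀ x : Fin n, w 0 x = s) ∧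
      (∀ i : Fin ℓ, ∀ s' t' : S,
        ((Finset.univ.filter
            (fun x : Fin n => w i.castSucc x = s' ∧ w i.succ x = t')).card : ℕ∞)
          ≤ f i s' t') ∧
      (∀ x : Fin n, w (Fin.last ℓ) x ∈ F) := by
  obtain ⟨g, hg⟩ := Pipeline.exists_isFlow h
  obtain ⟨w, hw0, hwg, hwF⟩ := hg.exists_tokens
  exact ⟨w, hw0, fun i u v => (hwg i u v).symm ▸ hg.1 (i, u, v), hwF⟩

/-- Pipeline capacity is at least the disconnection cost: if every index set
disconnecting `{s}` from `F` has cardinality at least `n`, then `n` tokens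
(indexed by `Fin n`), all starting in `s`, can be carried through the pipeline to
`F` while respecting the flow constraints. -/
theorem capacity_ge_disconnection_cost {S : Type*} [Fintype S] [DecidableEq S]
    {ℓ : ℕ} (hℓ : 1 ≤ ℓ) (f : Fin ℓ → S → S → ℕ∞)
    (hval : ∀ i : Fin ℓ, ∀ s t : S, f i s t = 0 ∨ f i s t = 1 ∨ f i s t = ⊤)
    (s : S) (F : Set S) (n : ℕ)
    (h : ∀ I : Finset (Fin ℓ), Disconnects f {s} F I → n ≤ I.card) :
    ∃ w : Fin (ℓ + 1) → Fin n → S,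
      (∀ x : Fin n, w 0 x = s) ∧
      (∀ i : Fin ℓ, ∀ s' t' : S,
        ((Finset.univ.filter
            (fun x : Fin n => w i.castSucc x = s' ∧ w i.succ x = t')).card : ℕ∞)
          ≤ f i s' t') ∧
      (∀ x : Fin n, w (Fin.last ℓ) x ∈ F) :=
  capacity_ge_disconnection_cost_general f s F n h
end
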